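/- arXiv:2410.19470 — 3 statements merged into one kernel-verified Lean document; each statement's English description precedes it below -/
import Mathlib

section
/- Let n, m be unit vectors in ℝ³, P_n = I − n⊗n, P_m = I − m⊗m. Then P_n P_m P_n − P_n = −(P_n m)⊗(P_n m), and therefore ‖P_n P_m P_n − P_n‖_F = ‖P_n m‖² ≤ ‖n − m‖². -/
open Matrix

lemma my_mul_vmv (M : Matrix (Fin 3) (Fin 3) ℝ) (a b : Fin 3 → ℝ) :
    M * vecMulVec a b = vecMulVec (M *ᵥ a) b := by
  ext i j
  simp [Matrix.mul_apply, vecMulVec_apply, Matrix.mulVec, dotProduct,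
    Finset.sum_mul, mul_assoc]

lemma my_vmv_mul (M : Matrix (Fin 3) (Fin 3) ℝ) (a b : Fin 3 → ℝ) :
    vecMulVec a b * M = vecMulVec a (b ᵥ* M) := by
  ext i j
  simp [Matrix.mul_apply, vecMulVec_apply, Matrix.vecMul, dotProduct,
    Finset.mul_sum, mul_assoc]

/-- For unit vectors `n, m` in `ℝ³`, `P_n = I − n⊗n`, `P_m = I − m⊗m`:
`P_n P_m P_n − P_n = −(P_n m)⊗(P_n m)`, so
`‖P_n P_m P_n − P_n‖_F = ‖P_n m‖² ≤ ‖n − m‖²`. -/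
theorem stmt4 (n m : Fin 3 → ℝ) (hn : n ⬝ᵥ n = 1) (hm : m ⬝ᵥ m = 1)
    (Pn Pm : Matrix (Fin 3) (Fin 3) ℝ)
    (hPn : Pn = 1 - vecMulVec n n) (hPm : Pm = 1 - vecMulVec m m) :
    Pn * Pm * Pn - Pn = -vecMulVec (Pn *ᵥ m) (Pn *ᵥ m) ∧
    Real.sqrt (∑ i, ∑ j, (Pn * Pm * Pn - Pn) i j ^ 2)
      = (Pn *ᵥ m) ⬝ᵥ (Pn *ᵥ m) ∧
    (Pn *ᵥ m) ⬝ᵥ (Pn *ᵥ m) ≤ (n - m) ⬝ᵥ (n - m) := by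
  subst hPn hPm
  set A : Matrix (Fin 3) (Fin 3) ℝ := vecMulVec n n with hA
  set B : Matrix (Fin 3) (Fin 3) ℝ := vecMulVec m m with hB
  have hn3 : n 0 * n 0 + n 1 * n 1 + n 2 * n 2 = 1 := by
    simpa [dotProduct, Fin.sum_univ_three] using hn
  have hm3 : m 0 * m 0 + m 1 * m 1 + m 2 * m 2 = 1 := by
    simpa [dotProduct, Fin.sum_univ_three] using hm
  have hAA : A * A = A := by
    ext i j
    simp [hA, Matrix.mul_apply, vecMulVec_apply, Fin.sum_univ_three]
    linear_combination (n i * n j) * hn3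
  have hXX : (1 - A) * (1 - A) = 1 - A := by
    have : (1 - A) * (1 - A) = 1 - A - A + A * A := by noncomm_ring
    rw [this, hAA]; abel
  have hsym : m ᵥ* (1 - A) = (1 - A) *ᵥ m := by
    ext j
    fin_cases j <;>
      simp [hA, Matrix.vecMul, Matrix.mulVec, dotProduct, vecMulVec_apply,
        Matrix.sub_apply, Matrix.one_apply, Fin.sum_univ_three] <;> ring
  have hXBX : (1 - A) * B * (1 - A) = vecMulVec ((1 - A) *ᵥ m) ((1 - A) *ᵥ m) := by
    rw [hB, my_mul_vmv, my_vmv_mul, hsym]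
  have h1 : (1 - A) * (1 - B) * (1 - A) - (1 - A)
      = -vecMulVec ((1 - A) *ᵥ m) ((1 - A) *ᵥ m) := by
    have expand : (1 - A) * (1 - B) * (1 - A)
        = (1 - A) * (1 - A) - (1 - A) * B * (1 - A) := by noncomm_ring
    rw [expand, hXX, hXBX]; abel
  refine ⟨h1, ?_, ?_⟩
  · rw [h1]
    set v : Fin 3 → ℝ := (1 - A) *ᵥ m with hv
    have hsum : ∑ i, ∑ j, (-vecMulVec v v) i j ^ 2 = (v ⬝ᵥ v) ^ 2 := by
      simp [vecMulVec_apply, dotProduct, Fin.sum_univ_three]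
      ring
    rw [hsum, Real.sqrt_sq]
    exact Finset.sum_nonneg fun i _ => mul_self_nonneg _
  · have hvv : ((1 - A) *ᵥ m) ⬝ᵥ ((1 - A) *ᵥ m)
        = 1 - (n 0 * m 0 + n 1 * m 1 + n 2 * m 2) ^ 2 := by
      simp [hA, Matrix.mulVec, dotProduct, vecMulVec_apply, Matrix.sub_apply,
        Matrix.one_apply, Fin.sum_univ_three]
      linear_combination hm3 + (n 0 * m 0 + n 1 * m 1 + n 2 * m 2) ^ 2 * hn3
    have hnm : (n - m) ⬝ᵥ (n - m)
        = 2 - 2 * (n 0 * m 0 + n 1 * m 1 + n 2 * m 2) := by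
      simp [dotProduct, Fin.sum_univ_three, Pi.sub_apply]
      linear_combination hn3 + hm3
    rw [hvv, hnm]
    nlinarith [sq_nonneg (n 0 * m 0 + n 1 * m 1 + n 2 * m 2 - 1)]
end

section
/- Let n, m be unit vectors in ℝ³ with ⟨m,n⟩ ≠ 0, let H be a symmetric 3×3 real matrix with H·n = 0, and let d ∈ ℝ be such that I − dH is invertible. Set P_n = I − n⊗n, P_m = I − m⊗m, B = P_m (I − dH) P_n, and C = P_n (I − dH)⁻¹ (I − (m⊗n)/(⟨m,n⟩)) P_m. Then C·B = P_n. -/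
open Matrix

private lemma vmv_mul_vmv (a b c e : Fin 3 → ℝ) :
    vecMulVec a b * vecMulVec c e = (b ⬝ᵥ c) • vecMulVec a e := by
  ext i j
  simp only [Matrix.mul_apply, Matrix.vecMulVec_apply, dotProduct,
    Matrix.smul_apply, smul_eq_mul, Finset.sum_mul, Finset.mul_sum]
  exact Finset.sum_congr rfl fun k _ => by ring

private lemma vmv_mul (a b : Fin 3 → ℝ) (M : Matrix (Fin 3) (Fin 3) ℝ) :
    vecMulVec a b * M = vecMulVec a (b ᵥ* M) := by
  ext i j
  simp only [Matrix.mul_apply, Matrix.vecMulVec_apply, Matrix.vecMul,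
    dotProduct, Finset.mul_sum]
  exact Finset.sum_congr rfl fun k _ => by ring

private lemma vecMul_vmv (v a b : Fin 3 → ℝ) :
    v ᵥ* vecMulVec a b = (v ⬝ᵥ a) • b := by
  ext j
  simp only [Matrix.vecMul, Matrix.vecMulVec_apply, dotProduct,
    Pi.smul_apply, smul_eq_mul, Finset.sum_mul]
  exact Finset.sum_congr rfl fun k _ => by ring

/-- Invertibility of the tangent-plane transfer map: with unit vectors `n, m`
(`⟨m,n⟩ ≠ 0`), a symmetric `H` with `H·n = 0`, and `I − dH` invertible, the
matrices `B = P_m(I − dH)P_n` and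
`C = P_n(I − dH)⁻¹(I − (m⊗n)/⟨m,n⟩)P_m` satisfy `C·B = P_n`. -/
theorem stmt7 (n m : Fin 3 → ℝ) (hn : n ⬝ᵥ n = 1) (hm : m ⬝ᵥ m = 1)
    (hmn : m ⬝ᵥ n ≠ 0)
    (H : Matrix (Fin 3) (Fin 3) ℝ) (hHsym : Hᵀ = H) (hHn : H *ᵥ n = 0)
    (d : ℝ) (hinv : IsUnit (1 - d • H))
    (Pn Pm B C : Matrix (Fin 3) (Fin 3) ℝ)
    (hPn : Pn = 1 - vecMulVec n n) (hPm : Pm = 1 - vecMulVec m m)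
    (hB : B = Pm * (1 - d • H) * Pn)
    (hC : C = Pn * (1 - d • H)⁻¹ * (1 - (m ⬝ᵥ n)⁻¹ • vecMulVec m n) * Pm) :
    C * B = Pn := by
  set A : Matrix (Fin 3) (Fin 3) ℝ := 1 - d • H with hA
  set X : Matrix (Fin 3) (Fin 3) ℝ := 1 - (m ⬝ᵥ n)⁻¹ • vecMulVec m n with hX
  have hAinv : A⁻¹ * A = 1 :=
    Matrix.nonsing_inv_mul A ((Matrix.isUnit_iff_isUnit_det A).mp hinv)
  have hnH : n ᵥ* H = 0 := by
    rw [← hHsym, Matrix.vecMul_transpose, hHn]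
  have hnA : n ᵥ* A = n := by
    have h1 : n ᵥ* (d • H) = d • (n ᵥ* H) := by
      ext j
      simp [Matrix.vecMul, dotProduct, Finset.mul_sum, mul_comm, mul_left_comm]
    rw [hA, Matrix.vecMul_sub, Matrix.vecMul_one, h1, hnH, smul_zero, sub_zero]
  -- Pm idempotent
  have hPm2 : Pm * Pm = Pm := by
    rw [hPm, sub_mul, mul_sub, mul_sub, one_mul, mul_one, vmv_mul_vmv, hm,
      one_smul, sub_self, sub_zero, one_mul]
  have hPn2 : Pn * Pn = Pn := by
    rw [hPn, sub_mul, mul_sub, mul_sub, one_mul, mul_one, vmv_mul_vmv, hn,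
      one_smul, sub_self, sub_zero, one_mul]
  -- X * Pm = X
  have hXPm : X * Pm = X := by
    rw [hX, hPm, sub_mul, mul_sub, mul_sub, one_mul, mul_one, Matrix.smul_mul,
      vmv_mul_vmv, show n ⬝ᵥ m = m ⬝ᵥ n from dotProduct_comm n m, smul_smul,
      inv_mul_cancel₀ hmn, one_smul, one_mul]
    abel
  -- X * A = A - s⁻¹ m⊗n
  have hXA : X * A = A - (m ⬝ᵥ n)⁻¹ • vecMulVec m n := by
    rw [hX, sub_mul, one_mul, Matrix.smul_mul, vmv_mul, hnA]
  -- n ᵥ* Pn = 0, hence (m⊗n) * Pn = 0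
  have hnPn : n ᵥ* Pn = 0 := by
    rw [hPn, Matrix.vecMul_sub, Matrix.vecMul_one, vecMul_vmv, hn, one_smul,
      sub_self]
  have hmnPn : vecMulVec m n * Pn = 0 := by
    rw [vmv_mul, hnPn]
    ext i j; simp [Matrix.vecMulVec_apply]
  have hXAPn : X * (A * Pn) = A * Pn := by
    rw [← mul_assoc, hXA, sub_mul, Matrix.smul_mul, hmnPn, smul_zero, sub_zero]
  have key : ∀ Z : Matrix (Fin 3) (Fin 3) ℝ, X * (Pm * Z) = X * Z := by
    intro Z; rw [← mul_assoc, hXPm]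
  have step1 : C * B = Pn * (A⁻¹ * (X * (Pm * (Pm * (A * Pn))))) := by
    rw [hC, hB]; simp only [mul_assoc]
  rw [step1, key, key, hXAPn, ← mul_assoc A⁻¹, hAinv, one_mul, hPn2]
end

section
/- Let n, m be unit vectors in ℝ³, d ∈ ℝ, H a 3×3 real matrix, and set P_n = I − n⊗n, P_m = I − m⊗m, B = P_m(I − dH)P_n. Then ‖P_n − B‖_F ≤ √2·‖n − m‖ + |d|·‖H‖_F. -/
open Matrix

/-- Multiplying on the right by an orthogonal projection `1 - vvᵀ` (with `v` a unit
vector) does not increase the Frobenius norm (squared form). -/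
lemma mulP_le_aux (v : Fin 3 → ℝ) (hv : ∑ k, v k * v k = 1)
    (A : Matrix (Fin 3) (Fin 3) ℝ) :
    ∑ i, ∑ j, ((A * (1 - vecMulVec v v)) i j) ^ 2 ≤ ∑ i, ∑ j, (A i j) ^ 2 := by
  refine Finset.sum_le_sum fun i _ => ?_
  have hentry : ∀ j, (A * (1 - vecMulVec v v)) i j
      = A i j - (∑ k, A i k * v k) * v j := by
    intro j
    rw [Matrix.mul_apply, Finset.sum_mul]
    have : ∀ k, A i k * (1 - vecMulVec v v) k j
        = A i k * (1 : Matrix (Fin 3) (Fin 3) ℝ) k j - A i k * v k * v j := by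
      intro k
      simp [Matrix.sub_apply, Matrix.vecMulVec_apply, mul_sub, mul_assoc]
    rw [Finset.sum_congr rfl fun k _ => this k, Finset.sum_sub_distrib]
    congr 1
    simp [Matrix.one_apply, mul_ite]
  set s := ∑ k, A i k * v k with hs
  have key : ∑ j, (A i j - s * v j) ^ 2 = (∑ j, (A i j) ^ 2) - s ^ 2 := by
    simp only [hs, Fin.sum_univ_three] at hv ⊢
    linear_combination (A i 0 * v 0 + A i 1 * v 1 + A i 2 * v 2) ^ 2 * hv
  calc ∑ j, ((A * (1 - vecMulVec v v)) i j) ^ 2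
      = ∑ j, (A i j - s * v j) ^ 2 := Finset.sum_congr rfl fun j _ => by rw [hentry]
    _ = (∑ j, (A i j) ^ 2) - s ^ 2 := key
    _ ≤ ∑ j, (A i j) ^ 2 := by nlinarith [sq_nonneg s]

lemma frob_transpose (X : Matrix (Fin 3) (Fin 3) ℝ) :
    ∑ i, ∑ j, (Xᵀ i j) ^ 2 = ∑ i, ∑ j, (X i j) ^ 2 := by
  rw [Finset.sum_comm]
  simp [Matrix.transpose_apply]

/-- Multiplying on the left by an orthogonal projection `1 - vvᵀ` does not increase
the Frobenius norm (squared form). -/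
lemma Pmul_le_aux (v : Fin 3 → ℝ) (hv : ∑ k, v k * v k = 1)
    (A : Matrix (Fin 3) (Fin 3) ℝ) :
    ∑ i, ∑ j, (((1 - vecMulVec v v) * A) i j) ^ 2 ≤ ∑ i, ∑ j, (A i j) ^ 2 := by
  have hvvT : (vecMulVec v v)ᵀ = vecMulVec v v := by
    ext i j; simp [Matrix.vecMulVec_apply, mul_comm]
  have hT : ((1 - vecMulVec v v) * A)ᵀ = Aᵀ * (1 - vecMulVec v v) := by
    rw [Matrix.transpose_mul, Matrix.transpose_sub, Matrix.transpose_one, hvvT]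
  calc ∑ i, ∑ j, (((1 - vecMulVec v v) * A) i j) ^ 2
      = ∑ i, ∑ j, (((1 - vecMulVec v v) * A)ᵀ i j) ^ 2 :=
        (frob_transpose _).symm
    _ = ∑ i, ∑ j, ((Aᵀ * (1 - vecMulVec v v)) i j) ^ 2 := by rw [hT]
    _ ≤ ∑ i, ∑ j, (Aᵀ i j) ^ 2 := mulP_le_aux v hv Aᵀ
    _ = ∑ i, ∑ j, (A i j) ^ 2 := frob_transpose _

/-- For unit vectors `n, m`, a scalar `d` and matrix `H`, with
`B = P_m(I − dH)P_n`, one has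
`‖P_n − B‖_F ≤ √2·‖n − m‖ + |d|·‖H‖_F`. -/
theorem stmt11 (n m : Fin 3 → ℝ) (hn : n ⬝ᵥ n = 1) (hm : m ⬝ᵥ m = 1)
    (d : ℝ) (H Pn Pm B : Matrix (Fin 3) (Fin 3) ℝ)
    (hPn : Pn = 1 - vecMulVec n n) (hPm : Pm = 1 - vecMulVec m m)
    (hB : B = Pm * (1 - d • H) * Pn) :
    Real.sqrt (∑ i, ∑ j, (Pn - B) i j ^ 2)
      ≤ Real.sqrt 2 * Real.sqrt ((n - m) ⬝ᵥ (n - m))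
        + |d| * Real.sqrt (∑ i, ∑ j, H i j ^ 2) := by
  have hn' : ∑ k, n k * n k = 1 := hn
  have hm' : ∑ k, m k * m k = 1 := hm
  -- idempotence of Pn
  have hvv : vecMulVec n n * vecMulVec n n = vecMulVec n n := by
    ext i j
    rw [Matrix.mul_apply]
    calc ∑ k, vecMulVec n n i k * vecMulVec n n k j
        = (n i * n j) * ∑ k, n k * n k := by
          rw [Finset.mul_sum]
          exact Finset.sum_congr rfl fun k _ => by
            simp [Matrix.vecMulVec_apply]; ring
      _ = vecMulVec n n i j := by rw [hn']; simp [Matrix.vecMulVec_apply]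
  have hPnPn : Pn * Pn = Pn := by
    rw [hPn, sub_mul, one_mul, mul_sub, mul_one, hvv]
    abel
  -- decomposition
  have hdecomp : Pn - B = (Pn - Pm) * Pn + d • (Pm * H * Pn) := by
    have hB' : B = Pm * Pn - d • (Pm * H * Pn) := by
      rw [hB, mul_sub, mul_one, sub_mul, Matrix.mul_smul, Matrix.smul_mul]
    rw [hB', sub_mul, hPnPn]
    abel
  -- Euclidean-space embedding to get the triangle inequality
  set e : Matrix (Fin 3) (Fin 3) ℝ → EuclideanSpace ℝ (Fin 3 × Fin 3) :=
    fun X => WithLp.toLp 2 (fun p : Fin 3 × Fin 3 => X p.1 p.2) with he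
  have hnorm : ∀ X : Matrix (Fin 3) (Fin 3) ℝ,
      Real.sqrt (∑ i, ∑ j, X i j ^ 2) = ‖e X‖ := by
    intro X
    rw [EuclideanSpace.norm_eq]
    congr 1
    rw [Fintype.sum_prod_type]
    simp [he, Real.norm_eq_abs, sq_abs]
  -- bound on ‖Pn - Pm‖
  have hCS : (n ⬝ᵥ m) ^ 2 ≤ 1 := by
    have := Finset.sum_mul_sq_le_sq_mul_sq Finset.univ n m
    have hnn : ∑ k, n k ^ 2 = 1 := by simpa [pow_two] using hn'
    have hmm : ∑ k, m k ^ 2 = 1 := by simpa [pow_two] using hm'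
    calc (n ⬝ᵥ m) ^ 2 = (∑ k, n k * m k) ^ 2 := rfl
      _ ≤ (∑ k, n k ^ 2) * ∑ k, m k ^ 2 := this
      _ = 1 := by rw [hnn, hmm, one_mul]
  have hdot : (n - m) ⬝ᵥ (n - m) = 2 - 2 * (n ⬝ᵥ m) := by
    rw [sub_dotProduct, dotProduct_sub, dotProduct_sub, hn, hm,
      dotProduct_comm m n]
    ring
  have hPnPmsq : ∑ i, ∑ j, ((Pn - Pm) i j) ^ 2 ≤ 2 * ((n - m) ⬝ᵥ (n - m)) := by
    have key : ∀ a b : Fin 3 → ℝ,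
        ∑ i, ∑ j, (a i * b i) * (a j * b j) = (a ⬝ᵥ b) ^ 2 := by
      intro a b
      rw [dotProduct, sq, Finset.sum_mul_sum]
    have hid : ∑ i, ∑ j, ((Pn - Pm) i j) ^ 2
        = 2 - 2 * (n ⬝ᵥ m) ^ 2 := by
      have hentry : ∀ i j, (Pn - Pm) i j = m i * m j - n i * n j := by
        intro i j
        simp [hPn, hPm, Matrix.sub_apply, Matrix.vecMulVec_apply]
      calc ∑ i, ∑ j, ((Pn - Pm) i j) ^ 2
          = ∑ i, ∑ j, ((m i * m i) * (m j * m j)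
              - 2 * ((m i * n i) * (m j * n j)) + (n i * n i) * (n j * n j)) := by
            refine Finset.sum_congr rfl fun i _ => Finset.sum_congr rfl fun j _ => ?_
            rw [hentry]; ring
        _ = (∑ i, ∑ j, (m i * m i) * (m j * m j))
              - 2 * (∑ i, ∑ j, (m i * n i) * (m j * n j))
              + ∑ i, ∑ j, (n i * n i) * (n j * n j) := by
            simp only [Finset.sum_add_distrib, Finset.sum_sub_distrib,
              ← Finset.mul_sum]
        _ = (m ⬝ᵥ m) ^ 2 - 2 * (m ⬝ᵥ n) ^ 2 + (n ⬝ᵥ n) ^ 2 := by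
            rw [key m m, key m n, key n n]
        _ = 2 - 2 * (n ⬝ᵥ m) ^ 2 := by
            rw [hn, hm, dotProduct_comm m n]; ring
    rw [hid, hdot]
    nlinarith [sq_nonneg (1 - n ⬝ᵥ m)]
  have hb1 : ‖e ((Pn - Pm) * Pn)‖ ≤ Real.sqrt 2 * Real.sqrt ((n - m) ⬝ᵥ (n - m)) := by
    rw [← hnorm]
    calc Real.sqrt (∑ i, ∑ j, ((Pn - Pm) * Pn) i j ^ 2)
        ≤ Real.sqrt (∑ i, ∑ j, ((Pn - Pm) i j) ^ 2) := by
          apply Real.sqrt_le_sqrt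
          have h := mulP_le_aux n hn' (Pn - Pm)
          rwa [← hPn] at h
      _ ≤ Real.sqrt (2 * ((n - m) ⬝ᵥ (n - m))) := Real.sqrt_le_sqrt hPnPmsq
      _ = Real.sqrt 2 * Real.sqrt ((n - m) ⬝ᵥ (n - m)) := Real.sqrt_mul (by norm_num) _
  have hb2 : ‖e (Pm * H * Pn)‖ ≤ Real.sqrt (∑ i, ∑ j, H i j ^ 2) := by
    rw [← hnorm]
    apply Real.sqrt_le_sqrt
    calc ∑ i, ∑ j, ((Pm * H * Pn) i j) ^ 2
        ≤ ∑ i, ∑ j, ((Pm * H) i j) ^ 2 := by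
          have h := mulP_le_aux n hn' (Pm * H)
          rwa [← hPn] at h
      _ ≤ ∑ i, ∑ j, (H i j) ^ 2 := by
          have h := Pmul_le_aux m hm' H
          rwa [← hPm] at h
  -- put it together
  rw [hnorm]
  have hsplit : e (Pn - B) = e ((Pn - Pm) * Pn) + e (d • (Pm * H * Pn)) := by
    rw [hdecomp]; rfl
  have hsmul : e (d • (Pm * H * Pn)) = d • e (Pm * H * Pn) := rfl
  calc ‖e (Pn - B)‖
      ≤ ‖e ((Pn - Pm) * Pn)‖ + ‖e (d • (Pm * H * Pn))‖ := by
        rw [hsplit]; exact norm_add_le _ _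
    _ = ‖e ((Pn - Pm) * Pn)‖ + |d| * ‖e (Pm * H * Pn)‖ := by
        rw [hsmul, norm_smul, Real.norm_eq_abs]
    _ ≤ Real.sqrt 2 * Real.sqrt ((n - m) ⬝ᵥ (n - m))
        + |d| * Real.sqrt (∑ i, ∑ j, H i j ^ 2) := by
        gcongr
end
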